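/- arXiv:1310.4637 — 2 statements merged into one kernel-verified Lean document; each statement's English description precedes it below -/
import Mathlib

section
/- For all integers m ≥ 0 and k ≥ 1, the Bernoulli number of order k satisfies B_m^{(k)} = Σ_{n=0}^m D_n^(k) S_2(m,n), where D_n^(k) are the Daehee numbers of order k and S_2 denotes the Stirling numbers of the second kind. -/
open PowerSeries Polynomial Finset

/-- `log(1+t) = Σ_{n≥1} (-1)^{n+1} t^n / n` as a formal power series over ℚ. -/
noncomputable def logOneAdd : PowerSeries ℚ :=
  PowerSeries.mk fun n => if n = 0 then 0 else (-1) ^ (n + 1) / (n : ℚ)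

/-- `−log(1−t) = Σ_{n≥1} t^n / n` as a formal power series over ℚ. -/
noncomputable def negLogOneSub : PowerSeries ℚ :=
  PowerSeries.mk fun n => if n = 0 then 0 else 1 / (n : ℚ)

/-- `e^t = Σ_{n≥0} t^n / n!` as a formal power series over ℚ. -/
noncomputable def expQ : PowerSeries ℚ :=
  PowerSeries.mk fun n => 1 / (n.factorial : ℚ)

/-- `log(1+t)` as a formal power series with coefficients in ℚ[x]. -/
noncomputable def logOneAddP : PowerSeries (Polynomial ℚ) :=
  PowerSeries.mk fun n => Polynomial.C (if n = 0 then 0 else (-1) ^ (n + 1) / (n : ℚ))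

/-- `−log(1−t)` as a formal power series with coefficients in ℚ[x]. -/
noncomputable def negLogOneSubP : PowerSeries (Polynomial ℚ) :=
  PowerSeries.mk fun n => Polynomial.C (if n = 0 then 0 else 1 / (n : ℚ))

/-- `e^t` as a formal power series with coefficients in ℚ[x]. -/
noncomputable def expP : PowerSeries (Polynomial ℚ) :=
  PowerSeries.mk fun n => Polynomial.C (1 / (n.factorial : ℚ))

/-- `e^{xt} = Σ_{n≥0} x^n t^n / n!` as a formal power series with coefficients in ℚ[x]. -/
noncomputable def expXT : PowerSeries (Polynomial ℚ) :=
  PowerSeries.mk fun n => Polynomial.C (1 / (n.factorial : ℚ)) * Polynomial.X ^ n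

/-- The binomial polynomial `x(x−1)⋯(x−n+1)/n! ∈ ℚ[x]`. -/
noncomputable def binomPoly (n : ℕ) : Polynomial ℚ :=
  Polynomial.C (1 / (n.factorial : ℚ)) *
    ∏ i ∈ Finset.range n, (Polynomial.X - Polynomial.C (i : ℚ))

/-- `(1+t)^x = Σ_{n≥0} C(x,n) t^n` as a formal power series with coefficients in ℚ[x]. -/
noncomputable def onePlusTX : PowerSeries (Polynomial ℚ) :=
  PowerSeries.mk binomPoly

/-- `(1−t)^x = Σ_{n≥0} (−1)^n C(x,n) t^n` as a formal power series with coefficients in ℚ[x]. -/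
noncomputable def oneSubTX : PowerSeries (Polynomial ℚ) :=
  PowerSeries.mk fun n => (-1) ^ n * binomPoly n

/-!
Substituting `t ↦ eᵗ - 1` is a ring endomorphism of `ℚ⟦t⟧` that sends `log(1 + t)` to `t`:
by the chain rule both have derivative `1`, and both vanish at `0`. Applied to
`log(1 + t)ᵏ = tᵏ Σ D_n tⁿ/n!` it gives `tᵏ = (eᵗ - 1)ᵏ Σ D_n/n! (eᵗ - 1)ⁿ`, and cancelling
`(eᵗ - 1)ᵏ` against the defining identity of `B^{(k)}` leaves
`Σ B_m tᵐ/m! = Σ D_n/n! (eᵗ - 1)ⁿ = Σ_m (Σ_n D_n S₂(m, n)) tᵐ/m!`.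
-/

namespace PowerSeries

variable {A : Type*} [CommRing A]

theorem coeff_pow_eq_zero_of_lt {a : A⟦X⟧} (ha : constantCoeff a = 0) {m n : ℕ} (h : m < n) :
    coeff m (a ^ n) = 0 :=
  X_pow_dvd_iff.mp (pow_dvd_pow_of_dvd (X_dvd_iff.mpr ha) n) m h

theorem coeff_subst_eq_sum_range {a : A⟦X⟧} (ha : constantCoeff a = 0) (f : A⟦X⟧) (m : ℕ) :
    coeff m (f.subst a) = ∑ n ∈ range (m + 1), coeff n f * coeff m (a ^ n) := by
  rw [coeff_subst' (HasSubst.of_constantCoeff_zero' ha)]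
  refine finsum_eq_sum_of_support_subset _ fun n hn => ?_
  by_contra hnm
  simp only [coe_range, Set.mem_Iio, not_lt] at hnm
  exact hn (by simp [coeff_pow_eq_zero_of_lt ha (by omega : m < n)])

variable [Algebra ℚ A]

theorem exp_sub_one_ne_zero [Nontrivial A] : exp A - 1 ≠ 0 := fun h => by
  simpa using congrArg (coeff 1) h

theorem derivative_log_mul_one_add_X : d⁄dX A (log A) * (1 + X) = 1 := by
  ext n
  rw [deriv_log, mul_add, mul_one, map_add]
  cases n with
  | zero => simp
  | succ n => simp [coeff_succ_mul_X, pow_succ]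

theorem logOf_exp [IsAddTorsionFree A] : logOf (exp A) = X := by
  have hs : HasSubst (exp A - 1) := HasSubst.exp_sub_one
  have hone : (1 : A⟦X⟧).subst (exp A - 1) = 1 := by rw [← coe_substAlgHom hs, map_one]
  have hlin : (1 + X : A⟦X⟧).subst (exp A - 1) = exp A := by
    rw [subst_add hs, subst_X hs, hone, add_sub_cancel]
  refine derivative.ext ?_ (by simp [constantCoeff_logOf])
  calc d⁄dX A (logOf (exp A))
      = (d⁄dX A (log A)).subst (exp A - 1) * exp A := by
        rw [logOf_eq, derivative_subst hs, map_sub, derivative_exp, derivative_one, sub_zero]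
    _ = (d⁄dX A (log A) * (1 + X)).subst (exp A - 1) := by rw [subst_mul hs, hlin]
    _ = d⁄dX A X := by rw [derivative_log_mul_one_add_X, hone, derivative_X]

end PowerSeries

theorem logOneAdd_eq_log : logOneAdd = PowerSeries.log ℚ := by
  ext n
  simp [logOneAdd]

theorem expQ_eq_exp : expQ = PowerSeries.exp ℚ := by
  ext n
  simp [expQ]

theorem bernoulli_order_eq_daehee_stirling2_sum_general
    (k : ℕ) (m : ℕ)
    (D : ℕ → ℚ)
    (hD : logOneAdd ^ k
      = PowerSeries.X ^ k * PowerSeries.mk (fun j => D j / (j.factorial : ℚ)))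
    (B : ℕ → ℚ)
    (hB : (PowerSeries.X : PowerSeries ℚ) ^ k
      = (expQ - 1) ^ k * PowerSeries.mk (fun j => B j / (j.factorial : ℚ)))
    (S2 : ℕ → ℕ → ℚ)
    (hS2 : ∀ j : ℕ, (expQ - 1) ^ j
      = PowerSeries.mk (fun l =>
          if j ≤ l then (j.factorial : ℚ) * S2 l j / (l.factorial : ℚ) else 0)) :
    B m = ∑ n ∈ Finset.range (m + 1), D n * S2 m n := by
  rw [logOneAdd_eq_log] at hD
  rw [expQ_eq_exp] at hB hS2
  have hs : HasSubst (exp ℚ - 1) := HasSubst.exp_sub_one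
  have hD_subst : (X : ℚ⟦X⟧) ^ k
      = (exp ℚ - 1) ^ k * (mk fun j => D j / j.factorial).subst (exp ℚ - 1) := by
    have h := congrArg (subst (exp ℚ - 1)) hD
    rwa [subst_pow hs, subst_mul hs, subst_pow hs, ← logOf_eq, logOf_exp, subst_X hs] at h
  have hBD : (mk fun j => B j / j.factorial) = (mk fun j => D j / j.factorial).subst (exp ℚ - 1) :=
    mul_left_cancel₀ (pow_ne_zero k exp_sub_one_ne_zero) (hB.symm.trans hD_subst)
  have hterm : ∀ n ∈ range (m + 1), PowerSeries.coeff n (mk fun j => D j / j.factorial)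
      * PowerSeries.coeff m ((exp ℚ - 1) ^ n) = D n * S2 m n / m.factorial := fun n hn => by
    rw [hS2, coeff_mk, coeff_mk, if_pos (Nat.lt_succ_iff.mp (mem_range.mp hn))]
    field_simp
  have hm := congrArg (PowerSeries.coeff m) hBD
  rw [coeff_mk, coeff_subst_eq_sum_range (by simp), sum_congr rfl hterm, ← sum_div] at hm
  field_simp at hm
  exact hm

/-- For `m ≥ 0`, `k ≥ 1`, the Bernoulli numbers of order `k` satisfy
`B_m^{(k)} = Σ_{n=0}^m D_n^(k) S_2(m,n)`, where `D_n^(k)` are the Daehee numbers of order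
`k` and `S_2` are the Stirling numbers of the second kind, defined by
`(e^t−1)^n = n! Σ_{l≥n} S_2(l,n) t^l/l!`. -/
theorem bernoulli_order_eq_daehee_stirling2_sum
    (k : ℕ) (hk : 1 ≤ k) (m : ℕ)
    (D : ℕ → ℚ)
    (hD : logOneAdd ^ k
      = PowerSeries.X ^ k * PowerSeries.mk (fun j => D j / (j.factorial : ℚ)))
    (B : ℕ → ℚ)
    (hB : (PowerSeries.X : PowerSeries ℚ) ^ k
      = (expQ - 1) ^ k * PowerSeries.mk (fun j => B j / (j.factorial : ℚ)))
    (S2 : ℕ → ℕ → ℚ)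
    (hS2 : ∀ j : ℕ, (expQ - 1) ^ j
      = PowerSeries.mk (fun l =>
          if j ≤ l then (j.factorial : ℚ) * S2 l j / (l.factorial : ℚ) else 0)) :
    B m = ∑ n ∈ Finset.range (m + 1), D n * S2 m n :=
  bernoulli_order_eq_daehee_stirling2_sum_general k m D hD B hB S2 hS2
end

section
/- For all integers n ≥ 1 and k ≥ 1, we have D̂_n^(k)(x)/n! = Σ_{m=1}^n (C(n−1, n−m)/m!) D_m^(k)(−x) as an identity of polynomials in x over ℚ, where D̂_n^(k)(x) are the Daehee polynomials of the second kind of order k, D_m^(k)(x) are the Daehee polynomials of order k, and C(n−1, n−m) is the binomial coefficient. -/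
open PowerSeries Polynomial Finset

/-!
Substituting `s = t/(1-t)` (in the code `X * mk 1`), for which `1 + s = (1-t)⁻¹`, into the
generating function `(log(1+s)/s)^k (1+s)^(-x)` of `D_m^(k)(-x)` turns it into
`((1-t)(-log(1-t))/t)^k (1-t)^x`, the generating function of `D̂_n^(k)(x)`. The coefficient of
`t^n` in `s^m = t^m (1-t)^(-m)` is `C(n-1, n-m)`, so comparing coefficients of `t^n` gives the
identity. On coefficients, `log(1+s) = -log(1-t)` is the alternating sum
`∑ C(n-1,i) (-1)^i/(i+1) = 1/n`, and `(1+s)^r = (1-t)^(-r)` is Chu–Vandermonde.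
-/
theorem sum_range_choose_mul_neg_one_pow_div (m : ℕ) :
    ∑ i ∈ range (m + 1), (m.choose i : ℚ) * (-1) ^ i / (i + 1) = 1 / (m + 1) := by
  have halt : ∑ i ∈ range (m + 1), ((-1) ^ i * (m + 1).choose (i + 1) : ℤ) = 1 := by
    have h := Int.alternating_sum_range_choose_of_ne (n := m + 1) (by omega)
    rw [sum_range_succ'] at h
    simp only [pow_succ, mul_neg_one, neg_mul, sum_neg_distrib, pow_zero,
      Nat.choose_zero_right, Nat.cast_one, mul_one] at h
    linarith
  have hterm : ∀ i ∈ range (m + 1), (m.choose i : ℚ) * (-1) ^ i / (i + 1)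
      = ((-1) ^ i * (m + 1).choose (i + 1) : ℤ) / (m + 1) := by
    intro i _
    have h : ((m + 1) * m.choose i : ℚ) = (m + 1).choose (i + 1) * (i + 1) := by
      exact_mod_cast Nat.add_one_mul_choose_eq m i
    field_simp
    push_cast
    linear_combination (-1) ^ i * h
  rw [sum_congr rfl hterm, ← sum_div, ← Int.cast_sum, halt, Int.cast_one]

namespace PowerSeries

variable {A : Type*} [CommRing A]

theorem hasSubst_X_mul_mk_one : HasSubst (X * mk 1 : A⟦X⟧) :=
  HasSubst.of_constantCoeff_zero' (by simp)

theorem one_sub_X_mul_X_mul_mk_one : (1 - X) * (X * mk 1 : A⟦X⟧) = X := by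
  rw [mul_left_comm, mul_comm (1 - X), mk_one_mul_one_sub_eq_one, mul_one]

theorem coeff_X_mul_mk_one_pow_of_lt {m n : ℕ} (h : n < m) :
    coeff n ((X * mk 1 : A⟦X⟧) ^ m) = 0 := by
  rw [mul_pow, coeff_X_pow_mul', if_neg (by omega)]

theorem coeff_X_mul_mk_one_pow {m n : ℕ} (h : m ≤ n) :
    coeff n ((X * mk 1 : A⟦X⟧) ^ m) = ((n - 1).choose (n - m) : A) := by
  rw [mul_pow, coeff_X_pow_mul', if_pos h]
  rcases m with _ | d
  · rcases n with _ | n <;> simp [coeff_one]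
  · rw [mk_one_pow_eq_mk_choose_add, coeff_mk, Nat.choose_symm_add]
    congr 2
    omega

/-- For `n = 0` the truncated `n - 1 = 0` makes the right-hand side `coeff 0 f`, as it should be. -/
theorem coeff_subst_X_mul_mk_one (f : A⟦X⟧) (n : ℕ) :
    coeff n (f.subst (X * mk 1 : A⟦X⟧)) =
      ∑ m ∈ range (n + 1), ((n - 1).choose (n - m) : A) * coeff m f := by
  rw [coeff_subst' hasSubst_X_mul_mk_one, finsum_eq_sum_of_support_subset (s := range (n + 1))]
  · refine sum_congr rfl fun m hm => ?_
    rw [smul_eq_mul, coeff_X_mul_mk_one_pow (Nat.lt_succ_iff.mp (mem_range.mp hm)), mul_comm]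
  · intro m hm
    by_contra h
    simp only [coe_range, Set.mem_Iio, not_lt] at h
    exact hm (by simp [coeff_X_mul_mk_one_pow_of_lt (A := A) (by omega : n < m)])

theorem map_binomialSeries {B : Type*} [CommRing B] [BinomialRing A] [BinomialRing B]
    (f : A →+* B) (r : A) : map f (binomialSeries A r) = binomialSeries B (f r) := by
  ext n
  simp [Ring.map_choose]

theorem binomialSeries_subst_X_mul_mk_one [BinomialRing A] (r : A) :
    (binomialSeries A r).subst (X * mk 1 : A⟦X⟧) = rescale (-1) (binomialSeries A (-r)) := by
  ext n
  rw [coeff_subst_X_mul_mk_one, coeff_rescale, binomialSeries_coeff, Ring.choose_neg]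
  rcases n with _ | m
  · simp
  · have hshift : r + ((m + 1 : ℕ) : A) - 1 = r + m := by push_cast; ring
    rw [hshift, Ring.add_choose_eq _ (Commute.all _ _),
      Nat.sum_antidiagonal_eq_sum_range_succ (fun i j => Ring.choose r i * Ring.choose (m : A) j)]
    simp only [Nat.add_sub_cancel, Nat.succ_eq_add_one, Ring.choose_natCast, smul_eq_mul,
      mul_one, Units.smul_def, zsmul_eq_mul, Int.cast_negOnePow_natCast, binomialSeries_coeff]
    rw [← mul_assoc, ← pow_add, ← two_mul, pow_mul, neg_one_sq, one_pow, one_mul]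
    exact sum_congr rfl fun i _ => mul_comm _ _

theorem log_subst_X_mul_mk_one [Algebra ℚ A] :
    (log A).subst (X * mk 1 : A⟦X⟧) = -rescale (-1) (log A) := by
  ext n
  rw [coeff_subst_X_mul_mk_one, map_neg, coeff_rescale, coeff_log]
  rcases n with _ | m
  · simp
  · have hq : -((-1 : ℚ) ^ (m + 1) * ((-1) ^ (m + 1 + 1) / (m + 1 : ℕ))) = 1 / (m + 1) := by
      rw [← mul_div_assoc, ← pow_add, Odd.neg_one_pow ⟨m + 1, by ring⟩]
      push_cast
      ring
    have hrhs : -((-1) ^ (m + 1) * algebraMap ℚ A ((-1) ^ (m + 1 + 1) / (m + 1 : ℕ)))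
        = algebraMap ℚ A (1 / (m + 1)) := by
      rw [← hq, map_neg, map_mul, map_pow, map_neg, map_one]
    rw [if_neg (Nat.add_one_ne_zero m), hrhs, ← sum_range_choose_mul_neg_one_pow_div, map_sum,
      sum_range_succ', coeff_zero_eq_constantCoeff_apply, constantCoeff_log, mul_zero, add_zero]
    refine sum_congr rfl fun x hx => ?_
    rw [coeff_log, if_neg (Nat.add_one_ne_zero x), Nat.add_sub_cancel, Nat.add_sub_add_right,
      Nat.choose_symm (by simpa [Nat.lt_succ_iff] using hx), ← map_natCast (algebraMap ℚ A),
      ← map_mul]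
    congr 1
    push_cast
    ring

end PowerSeries

theorem logOneAddP_eq_log : logOneAddP = PowerSeries.log ℚ[X] := by
  ext n
  simp [logOneAddP, apply_ite Polynomial.C]

theorem negLogOneSubP_eq_neg_rescale_log :
    negLogOneSubP = -rescale (-1) (PowerSeries.log ℚ[X]) := by
  refine PowerSeries.ext fun n => ?_
  rw [negLogOneSubP, coeff_mk, map_neg, coeff_rescale, coeff_log]
  split_ifs with hn
  · simp
  · rw [Polynomial.algebraMap_eq, ← map_one Polynomial.C, ← map_neg, ← map_pow, ← map_mul,
      ← map_neg, ← mul_div_assoc, ← pow_add, Odd.neg_one_pow ⟨n, by ring⟩, neg_div, neg_neg]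

theorem binomPoly_eq_choose (n : ℕ) : binomPoly n = Ring.choose (Polynomial.X : ℚ[X]) n := by
  have h := Ring.descPochhammer_eq_factorial_smul_choose (Polynomial.X : ℚ[X]) n
  rw [← aeval_eq_smeval, aeval_def, ← eval_map, descPochhammer_map,
    descPochhammer_eval_eq_prod_range, nsmul_eq_mul] at h
  simp only [binomPoly, C_eq_natCast, h, ← mul_assoc]
  rw [← C_eq_natCast, ← C_mul, one_div_mul_cancel (by positivity), C_1, one_mul]

theorem onePlusTX_eq_binomialSeries :
    onePlusTX = binomialSeries ℚ[X] (Polynomial.X : ℚ[X]) := by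
  ext n
  simp [onePlusTX, binomPoly_eq_choose]

theorem oneSubTX_eq_rescale_binomialSeries :
    oneSubTX = rescale (-1) (binomialSeries ℚ[X] (Polynomial.X : ℚ[X])) := by
  ext n
  simp [oneSubTX, binomPoly_eq_choose]

theorem X_pow_mul_subst_map_neg_eq_of_daehee_generating_function (k : ℕ) (F : ℚ[X]⟦X⟧)
    (hF : logOneAddP ^ k * onePlusTX = PowerSeries.X ^ k * F) :
    PowerSeries.X ^ k
        * (map (compRingHom (-Polynomial.X)) F).subst (PowerSeries.X * PowerSeries.mk 1 : ℚ[X]⟦X⟧)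
      = ((1 - PowerSeries.X) * negLogOneSubP) ^ k * oneSubTX := by
  set φ := compRingHom (-Polynomial.X : ℚ[X])
  set σ : ℚ[X]⟦X⟧ := PowerSeries.X * PowerSeries.mk 1
  calc PowerSeries.X ^ k * (map φ F).subst σ
      = (1 - PowerSeries.X) ^ k * (map φ (PowerSeries.X ^ k * F)).subst σ := by
        rw [map_mul, map_pow, PowerSeries.map_X, subst_mul hasSubst_X_mul_mk_one,
          subst_pow hasSubst_X_mul_mk_one, subst_X hasSubst_X_mul_mk_one, ← mul_assoc,
          ← mul_pow, one_sub_X_mul_X_mul_mk_one]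
    _ = (1 - PowerSeries.X) ^ k * (map φ (logOneAddP ^ k * onePlusTX)).subst σ := by rw [hF]
    _ = ((1 - PowerSeries.X) * negLogOneSubP) ^ k * oneSubTX := by
        rw [logOneAddP_eq_log, onePlusTX_eq_binomialSeries, map_mul, map_pow, map_log,
          map_binomialSeries, subst_mul hasSubst_X_mul_mk_one, subst_pow hasSubst_X_mul_mk_one,
          log_subst_X_mul_mk_one, binomialSeries_subst_X_mul_mk_one,
          show φ Polynomial.X = -Polynomial.X from X_comp, neg_neg,
          negLogOneSubP_eq_neg_rescale_log, oneSubTX_eq_rescale_binomialSeries, mul_pow, mul_assoc]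

theorem daehee_second_kind_poly_eq_sum_daehee_poly_neg_general
    (k : ℕ) (n : ℕ) (hn : 1 ≤ n)
    (D : ℕ → Polynomial ℚ)
    (hD : logOneAddP ^ k * onePlusTX
      = PowerSeries.X ^ k
          * PowerSeries.mk (fun j => Polynomial.C ((j.factorial : ℚ)⁻¹) * D j))
    (Dh : ℕ → Polynomial ℚ)
    (hDh : ((1 - PowerSeries.X) * negLogOneSubP) ^ k * oneSubTX
      = PowerSeries.X ^ k
          * PowerSeries.mk (fun j => Polynomial.C ((j.factorial : ℚ)⁻¹) * Dh j)) :
    Polynomial.C ((n.factorial : ℚ)⁻¹) * Dh n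
      = ∑ m ∈ Finset.Icc 1 n,
          Polynomial.C (((n - 1).choose (n - m) : ℚ) / (m.factorial : ℚ))
            * (D m).comp (-Polynomial.X) := by
  set F := PowerSeries.mk fun j => Polynomial.C ((j.factorial : ℚ)⁻¹) * D j
  have hcoeff := congrArg (PowerSeries.coeff (n + k))
    ((X_pow_mul_subst_map_neg_eq_of_daehee_generating_function k F hD).trans hDh)
  rw [PowerSeries.coeff_X_pow_mul, PowerSeries.coeff_X_pow_mul, coeff_mk,
    coeff_subst_X_mul_mk_one] at hcoeff
  rw [← hcoeff, ← sum_subset (s₁ := Icc 1 n) (fun m hm => by simp only [mem_Icc, mem_range] at hm ⊢; omega)]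
  · refine sum_congr rfl fun m _ => ?_
    rw [PowerSeries.coeff_map, coeff_mk, coe_compRingHom_apply, mul_comp, C_comp, div_eq_mul_inv,
      C_mul, map_natCast, mul_assoc]
  · intro m hm hm'
    obtain rfl : m = 0 := by simp only [mem_range, mem_Icc, not_and, not_le] at hm hm'; omega
    rw [Nat.choose_eq_zero_of_lt (by omega), Nat.cast_zero, zero_mul]

/-- For `n ≥ 1`, `k ≥ 1`, we have
`D̂_n^(k)(x)/n! = Σ_{m=1}^n (C(n−1,n−m)/m!) D_m^(k)(−x)` in `ℚ[x]`, where `D̂_n^(k)(x)`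
are the Daehee polynomials of the second kind of order `k` and `D_m^(k)(x)` the Daehee
polynomials of order `k`. -/
theorem daehee_second_kind_poly_eq_sum_daehee_poly_neg
    (k : ℕ) (hk : 1 ≤ k) (n : ℕ) (hn : 1 ≤ n)
    (D : ℕ → Polynomial ℚ)
    (hD : logOneAddP ^ k * onePlusTX
      = PowerSeries.X ^ k
          * PowerSeries.mk (fun j => Polynomial.C ((j.factorial : ℚ)⁻¹) * D j))
    (Dh : ℕ → Polynomial ℚ)
    (hDh : ((1 - PowerSeries.X) * negLogOneSubP) ^ k * oneSubTX
      = PowerSeries.X ^ k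
          * PowerSeries.mk (fun j => Polynomial.C ((j.factorial : ℚ)⁻¹) * Dh j)) :
    Polynomial.C ((n.factorial : ℚ)⁻¹) * Dh n
      = ∑ m ∈ Finset.Icc 1 n,
          Polynomial.C (((n - 1).choose (n - m) : ℚ) / (m.factorial : ℚ))
            * (D m).comp (-Polynomial.X) :=
  daehee_second_kind_poly_eq_sum_daehee_poly_neg_general k n hn D hD Dh hDh
end
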